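/- arXiv:1507.03065 — 2 statements merged into one kernel-verified Lean document; each statement's English description precedes it below -/
import Mathlib

section
/- The periodic set of the minimal RS flip-flop map consists of exactly three points: {p ∈ X : Fⁿ(p) = p for some integer n ≥ 1} = {p*, (1,0), (0,1)}, where p* := ((3−√5)/2, (3−√5)/2); in particular the 2-cycle {(1,0),(0,1)} is the only cycle of F of period greater than one. -/
open Set

/-- The minimal RS flip-flop map. -/
noncomputable def F (p : ℝ × ℝ) : ℝ × ℝ :=
  (p.2 * (1 - p.1) / (p.1 + p.2 - p.1 * p.2),
   p.1 * (1 - p.2) / (p.1 + p.2 - p.1 * p.2))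

/-- The domain X = [0,1]² minus the two corners (0,0) and (1,1). -/
def X : Set (ℝ × ℝ) :=
  (Icc (0:ℝ) 1 ×ˢ Icc (0:ℝ) 1) \ {((0:ℝ), (0:ℝ)), ((1:ℝ), (1:ℝ))}

/-- The fixed point p* = ((3−√5)/2, (3−√5)/2). -/
noncomputable def pstar : ℝ × ℝ := ((3 - Real.sqrt 5) / 2, (3 - Real.sqrt 5) / 2)

namespace FlipFlopAux

/-- interior of the square -/
def Intr (p : ℝ × ℝ) : Prop := 0 < p.1 ∧ p.1 < 1 ∧ 0 < p.2 ∧ p.2 < 1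

lemma D_pos {p : ℝ × ℝ} (h : Intr p) : 0 < p.1 + p.2 - p.1 * p.2 := by
  obtain ⟨h1, h2, h3, h4⟩ := h; nlinarith

lemma Intr_F {p : ℝ × ℝ} (h : Intr p) : Intr (F p) := by
  have hD := D_pos h
  obtain ⟨h1, h2, h3, h4⟩ := h
  refine ⟨div_pos (by nlinarith) hD, (div_lt_one hD).2 (by nlinarith),
          div_pos (by nlinarith) hD, (div_lt_one hD).2 (by nlinarith)⟩

/-- the linear functionals in log coordinates -/
noncomputable def ll (c : ℝ) (p : ℝ × ℝ) : ℝ :=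
  c * (Real.log p.1 - Real.log p.2) + (Real.log (1 - p.1) - Real.log (1 - p.2))

lemma ll_F {c : ℝ} (hc : c ^ 2 = 1 - c) {p : ℝ × ℝ} (h : Intr p) :
    ll c (F p) = c * ll c p := by
  have hD := D_pos h
  obtain ⟨h1, h2, h3, h4⟩ := h
  have hx1 : (F p).1 = p.2 * (1 - p.1) / (p.1 + p.2 - p.1 * p.2) := rfl
  have hx2 : (F p).2 = p.1 * (1 - p.2) / (p.1 + p.2 - p.1 * p.2) := rfl
  have e1 : 1 - (F p).1 = p.1 / (p.1 + p.2 - p.1 * p.2) := by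
    rw [hx1, eq_div_iff hD.ne', sub_mul, div_mul_cancel₀ _ hD.ne']; ring
  have e2 : 1 - (F p).2 = p.2 / (p.1 + p.2 - p.1 * p.2) := by
    rw [hx2]; field_simp; ring
  have l1 : Real.log ((F p).1)
      = Real.log p.2 + Real.log (1 - p.1) - Real.log (p.1 + p.2 - p.1 * p.2) := by
    rw [hx1, Real.log_div (mul_pos h3 (by linarith : (0:ℝ) < 1 - p.1)).ne' hD.ne',
      Real.log_mul h3.ne' (by linarith : (1:ℝ) - p.1 ≠ 0)]
  have l2 : Real.log ((F p).2)
      = Real.log p.1 + Real.log (1 - p.2) - Real.log (p.1 + p.2 - p.1 * p.2) := by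
    rw [hx2, Real.log_div (mul_pos h1 (by linarith : (0:ℝ) < 1 - p.2)).ne' hD.ne',
      Real.log_mul h1.ne' (by linarith : (1:ℝ) - p.2 ≠ 0)]
  have m1 : Real.log (1 - (F p).1)
      = Real.log p.1 - Real.log (p.1 + p.2 - p.1 * p.2) := by
    rw [e1, Real.log_div h1.ne' hD.ne']
  have m2 : Real.log (1 - (F p).2)
      = Real.log p.2 - Real.log (p.1 + p.2 - p.1 * p.2) := by
    rw [e2, Real.log_div h3.ne' hD.ne']
  unfold ll
  rw [l1, l2, m1, m2]
  linear_combination (Real.log p.2 - Real.log p.1) * hc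

lemma iter_ll (c : ℝ) (hc : c ^ 2 = 1 - c) {p : ℝ × ℝ} (h : Intr p) :
    ∀ n : ℕ, Intr (F^[n] p) ∧ ll c (F^[n] p) = c ^ n * ll c p := by
  intro n
  induction n with
  | zero => simpa using h
  | succ n ih =>
    rw [Function.iterate_succ_apply']
    exact ⟨Intr_F ih.1, by rw [ll_F hc ih.1, ih.2, pow_succ]; ring⟩

lemma sqrt5_sq : Real.sqrt 5 ^ 2 = 5 := Real.sq_sqrt (by norm_num)

lemma sqrt5_gt : 2 < Real.sqrt 5 := by
  nlinarith [Real.sqrt_nonneg 5, sqrt5_sq]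

lemma sqrt5_lt : Real.sqrt 5 < 3 := by
  nlinarith [Real.sqrt_nonneg 5, sqrt5_sq]

/-- interior periodic points lie on the diagonal -/
lemma interior_periodic_diag {p : ℝ × ℝ} (h : Intr p) {n : ℕ} (hn : 1 ≤ n)
    (hfix : F^[n] p = p) : p.1 = p.2 := by
  set s := Real.sqrt 5 with hs
  have s5 : s ^ 2 = 5 := sqrt5_sq
  have sgt : 2 < s := sqrt5_gt
  have slt : s < 3 := sqrt5_lt
  set lam := (s - 1) / 2 with hlamdef
  set mu := (-1 - s) / 2 with hmudef
  have hlam : lam ^ 2 = 1 - lam := by rw [hlamdef]; linear_combination s5 / 4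
  have hmu : mu ^ 2 = 1 - mu := by rw [hmudef]; linear_combination s5 / 4
  -- ll lam p = 0
  have hLlam : ll lam p = lam ^ n * ll lam p := by
    have := (iter_ll lam hlam h n).2
    rw [hfix] at this
    exact this
  have hlampow : lam ^ n < 1 := by
    apply pow_lt_one₀ (by rw [hlamdef]; linarith) (by rw [hlamdef]; linarith)
    omega
  have hllam0 : ll lam p = 0 := by
    rcases mul_eq_zero.mp (show (1 - lam ^ n) * ll lam p = 0 by
      linear_combination hLlam) with h' | h'
    · exact absurd h' (by intro hz; linarith)
    · exact h'
  -- ll mu p = 0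
  have hLmu : ll mu p = mu ^ n * ll mu p := by
    have := (iter_ll mu hmu h n).2
    rw [hfix] at this
    exact this
  have hmupow : mu ^ n ≠ 1 := by
    intro hz
    have habs : |mu| ^ n = 1 := by
      rw [← abs_pow, hz, abs_one]
    have h1 : (1:ℝ) < |mu| := by
      rw [hmudef, abs_of_neg (by linarith)]; linarith
    have := one_lt_pow₀ h1 (by omega : n ≠ 0)
    rw [habs] at this
    exact lt_irrefl 1 this
  have hllmu0 : ll mu p = 0 := by
    rcases mul_eq_zero.mp (show (1 - mu ^ n) * ll mu p = 0 by
      linear_combination hLmu) with h' | h'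
    · exact absurd h' (by intro hz; exact hmupow (by linarith))
    · exact h'
  -- subtract to get log p.1 = log p.2
  unfold ll at hllam0 hllmu0
  have hlogeq : Real.log p.1 = Real.log p.2 := by
    have hdiff : (lam - mu) * (Real.log p.1 - Real.log p.2) = 0 := by
      linear_combination hllam0 - hllmu0
    have : lam - mu ≠ 0 := by rw [hlamdef, hmudef]; intro hz; linarith
    have := (mul_eq_zero.mp hdiff).resolve_left this
    linarith
  exact Real.log_injOn_pos (Set.mem_Ioi.mpr h.1) (Set.mem_Ioi.mpr h.2.2.1) hlogeq

/-- the diagonal map -/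
noncomputable def g (x : ℝ) : ℝ := (1 - x) / (2 - x)

lemma F_diag {x : ℝ} (hx : 0 < x) (hx1 : x < 1) : F (x, x) = (g x, g x) := by
  have hD : x + x - x * x ≠ 0 := by nlinarith
  have h2 : (2:ℝ) - x ≠ 0 := by intro hz; linarith
  unfold F g
  simp only [Prod.mk.injEq]
  constructor <;> (rw [div_eq_div_iff (by simpa using hD) (by simpa using h2)]; ring)

lemma g_mem {x : ℝ} (hx : 0 < x) (hx1 : x < 1) : 0 < g x ∧ g x < 1 := by
  have h2 : (0:ℝ) < 2 - x := by linarith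
  unfold g
  constructor
  · exact div_pos (by linarith) h2
  · rw [div_lt_one h2]; linarith

lemma xstar_c0 : ((Real.sqrt 5 - 1) / 2) * (2 - (3 - Real.sqrt 5) / 2) = 1 := by
  linear_combination sqrt5_sq / 4

lemma g_contract {x : ℝ} (hx : 0 ≤ x) (hx1 : x ≤ 1) :
    |g x - (3 - Real.sqrt 5) / 2| ≤ ((Real.sqrt 5 - 1) / 2) * |x - (3 - Real.sqrt 5) / 2| := by
  set s := Real.sqrt 5 with hs
  have s5 : s ^ 2 = 5 := sqrt5_sq
  have sgt : 2 < s := sqrt5_gt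
  have slt : s < 3 := sqrt5_lt
  have h2x : (0:ℝ) < 2 - x := by linarith
  have h2s : (0:ℝ) < 2 - (3 - s) / 2 := by linarith
  have key : (2 - x) * (g x - (3 - s) / 2) * (2 - (3 - s) / 2) = (3 - s) / 2 - x := by
    unfold g
    field_simp
    ring_nf
    nlinarith [s5]
  have habs : (2 - x) * |g x - (3 - s) / 2| * (2 - (3 - s) / 2) = |x - (3 - s) / 2| := by
    have := congrArg abs key
    rwa [abs_mul, abs_mul, abs_of_pos h2x, abs_of_pos h2s, abs_sub_comm ((3 - s) / 2) x] at this
  have hone : (2 - x) ≥ 1 := by linarith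
  have hcinv : ((s - 1) / 2) * (2 - (3 - s) / 2) = 1 := xstar_c0
  have hAd : |g x - (3 - s) / 2| * (2 - (3 - s) / 2) ≤ |x - (3 - s) / 2| := by
    nlinarith [mul_nonneg (abs_nonneg (g x - (3 - s) / 2)) h2s.le]
  have hA : |g x - (3 - s) / 2| =
      ((s - 1) / 2) * (|g x - (3 - s) / 2| * (2 - (3 - s) / 2)) := by
    linear_combination (-|g x - (3 - s) / 2|) * hcinv
  rw [hA]
  apply mul_le_mul_of_nonneg_left hAd (by linarith)

lemma diag_all {x : ℝ} (hx : 0 < x) (hx1 : x < 1) (n : ℕ) :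
    F^[n] (x, x) = (g^[n] x, g^[n] x) ∧ 0 < g^[n] x ∧ g^[n] x < 1 ∧
      |g^[n] x - (3 - Real.sqrt 5) / 2| ≤
        ((Real.sqrt 5 - 1) / 2) ^ n * |x - (3 - Real.sqrt 5) / 2| := by
  induction n with
  | zero => exact ⟨by simp, by simpa using hx, by simpa using hx1, by simp⟩
  | succ n ih =>
    obtain ⟨ih1, ih2, ih3, ih4⟩ := ih
    have hg := g_mem ih2 ih3
    simp only [Function.iterate_succ_apply']
    refine ⟨?_, hg.1, hg.2, ?_⟩
    · rw [ih1, F_diag ih2 ih3]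
    · calc |g (g^[n] x) - (3 - Real.sqrt 5) / 2|
          ≤ ((Real.sqrt 5 - 1) / 2) * |g^[n] x - (3 - Real.sqrt 5) / 2| :=
            g_contract ih2.le ih3.le
        _ ≤ ((Real.sqrt 5 - 1) / 2) * (((Real.sqrt 5 - 1) / 2) ^ n *
              |x - (3 - Real.sqrt 5) / 2|) := by
            apply mul_le_mul_of_nonneg_left ih4
            have := sqrt5_gt; linarith
        _ = ((Real.sqrt 5 - 1) / 2) ^ (n + 1) * |x - (3 - Real.sqrt 5) / 2| := by
            rw [pow_succ]; ring

/-- the cycle set -/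
def C : Set (ℝ × ℝ) := {((1:ℝ), (0:ℝ)), ((0:ℝ), (1:ℝ))}

lemma F10 : F ((1:ℝ), (0:ℝ)) = ((0:ℝ), (1:ℝ)) := by
  unfold F; norm_num

lemma F01 : F ((0:ℝ), (1:ℝ)) = ((1:ℝ), (0:ℝ)) := by
  unfold F; norm_num

lemma FC {q : ℝ × ℝ} (h : q ∈ C) : F q ∈ C := by
  rcases h with h | h
  · rw [h, F10]; right; rfl
  · rw [mem_singleton_iff.mp h, F01]; left; rfl

lemma FC_iter {q : ℝ × ℝ} (h : q ∈ C) (m : ℕ) : F^[m] q ∈ C := by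
  induction m with
  | zero => simpa using h
  | succ m ih => rw [Function.iterate_succ_apply']; exact FC ih

lemma F0y {y : ℝ} (hy : 0 < y) : F ((0:ℝ), y) = ((1:ℝ), (0:ℝ)) := by
  unfold F
  simp only [Prod.mk.injEq]
  norm_num
  exact hy.ne'

lemma Fx0 {x : ℝ} (hx : 0 < x) : F (x, (0:ℝ)) = ((0:ℝ), (1:ℝ)) := by
  unfold F
  simp only [Prod.mk.injEq]
  norm_num
  exact hx.ne'

lemma F1y {y : ℝ} : F ((1:ℝ), y) = ((0:ℝ), 1 - y) := by
  unfold F; norm_num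

lemma Fx1 {x : ℝ} : F (x, (1:ℝ)) = (1 - x, (0:ℝ)) := by
  unfold F; norm_num

/-- boundary points reach the 2-cycle after two steps -/
lemma boundary_C {p : ℝ × ℝ} (hp : p ∈ X)
    (hb : p.1 = 0 ∨ p.1 = 1 ∨ p.2 = 0 ∨ p.2 = 1) : F^[2] p ∈ C := by
  obtain ⟨⟨⟨hx0, hx1⟩, hy0, hy1⟩, hnc⟩ := hp
  have hnc' : p ≠ ((0:ℝ), (0:ℝ)) ∧ p ≠ ((1:ℝ), (1:ℝ)) := by
    constructor <;> (intro hz; apply hnc; rw [hz]) <;> simp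
  have hp12 : p = (p.1, p.2) := rfl
  have hstep : F^[2] p = F (F p) := by
    rw [show (2:ℕ) = 1 + 1 from rfl, Function.iterate_add_apply, Function.iterate_one]
  rcases hb with h | h | h | h
  · -- p.1 = 0, p.2 > 0
    have hy : 0 < p.2 := by
      rcases lt_or_eq_of_le hy0 with h' | h'
      · exact h'
      · exact absurd (Prod.ext_iff.mpr ⟨h, h'.symm⟩) hnc'.1
    rw [hstep, hp12, h, F0y hy, F10]
    right; rfl
  · -- p.1 = 1, p.2 < 1
    have hy : p.2 < 1 := by
      rcases lt_or_eq_of_le hy1 with h' | h'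
      · exact h'
      · exact absurd (Prod.ext_iff.mpr ⟨h, h'⟩) hnc'.2
    rw [hstep, hp12, h, F1y, F0y (by linarith)]
    left; rfl
  · -- p.2 = 0, p.1 > 0
    have hx : 0 < p.1 := by
      rcases lt_or_eq_of_le hx0 with h' | h'
      · exact h'
      · exact absurd (Prod.ext_iff.mpr ⟨h'.symm, h⟩) hnc'.1
    rw [hstep, hp12, h, Fx0 hx, F01]
    left; rfl
  · -- p.2 = 1, p.1 < 1
    have hx : p.1 < 1 := by
      rcases lt_or_eq_of_le hx1 with h' | h'
      · exact h'
      · exact absurd (Prod.ext_iff.mpr ⟨h', h⟩) hnc'.2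
    rw [hstep, hp12, h, Fx1, Fx0 (by linarith)]
    right; rfl

lemma F_pstar : F pstar = pstar := by
  have s5 := sqrt5_sq
  have sgt := sqrt5_gt
  have slt := sqrt5_lt
  set x := (3 - Real.sqrt 5) / 2 with hxdef
  have hx : 0 < x := by rw [hxdef]; linarith
  have hx1 : x < 1 := by rw [hxdef]; linarith
  have hD : (0:ℝ) < x + x - x * x := by nlinarith
  unfold F pstar
  simp only [Prod.mk.injEq, ← hxdef]
  constructor <;>
    (rw [div_eq_iff hD.ne']; rw [hxdef]; linear_combination (3 - Real.sqrt 5) / 8 * s5)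

end FlipFlopAux

open FlipFlopAux in
/-- The periodic set of F consists of exactly three points: p*, (1,0) and (0,1). -/
theorem periodic_set :
    {p : ℝ × ℝ | p ∈ X ∧ ∃ n : ℕ, 1 ≤ n ∧ F^[n] p = p} =
      {pstar, ((1:ℝ), (0:ℝ)), ((0:ℝ), (1:ℝ))} := by
  ext p
  simp only [mem_setOf_eq, mem_insert_iff, mem_singleton_iff]
  constructor
  · rintro ⟨hX, n, hn, hfix⟩
    obtain ⟨⟨⟨hx0, hx1⟩, hy0, hy1⟩, hnc⟩ := hX
    by_cases hint : Intr p
    · -- interior case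
      left
      have hdiag := interior_periodic_diag hint hn hfix
      have hp12 : p = (p.1, p.1) := Prod.ext_iff.mpr ⟨rfl, hdiag.symm⟩
      obtain ⟨h1, h2, _, _⟩ := hint
      have hall := diag_all h1 h2 n
      have hgfix : g^[n] p.1 = p.1 := by
        have := hall.1
        rw [← hp12, hfix, hp12] at this
        exact (Prod.mk.injEq _ _ _ _).mp this.symm |>.1
      have hbound := hall.2.2.2
      rw [hgfix] at hbound
      have hc1 : ((Real.sqrt 5 - 1) / 2) ^ n < 1 := by
        apply pow_lt_one₀
        · have := sqrt5_gt; linarith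
        · have := sqrt5_lt; linarith
        · omega
      have hzero : |p.1 - (3 - Real.sqrt 5) / 2| = 0 := by
        nlinarith [abs_nonneg (p.1 - (3 - Real.sqrt 5) / 2)]
      have hxeq : p.1 = (3 - Real.sqrt 5) / 2 := by
        have := abs_eq_zero.mp hzero
        linarith
      rw [hp12, hxeq]; rfl
    · -- boundary case
      have hb : p.1 = 0 ∨ p.1 = 1 ∨ p.2 = 0 ∨ p.2 = 1 := by
        rcases lt_or_eq_of_le hx0 with h1 | h1
        · rcases lt_or_eq_of_le hx1 with h2 | h2
          · rcases lt_or_eq_of_le hy0 with h3 | h3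
            · rcases lt_or_eq_of_le hy1 with h4 | h4
              · exact absurd (⟨h1, h2, h3, h4⟩ : Intr p) hint
              · right; right; right; exact h4
            · right; right; left; exact h3.symm
          · right; left; exact h2
        · left; exact h1.symm
      have hC2 : F^[2] p ∈ C := boundary_C ⟨⟨⟨hx0, hx1⟩, hy0, hy1⟩, hnc⟩ hb
      have hpC : p ∈ C := by
        have hfix2 : F^[n * 2] p = p := by
          rw [Function.iterate_mul]
          rw [show (2:ℕ) = 1 + 1 from rfl, Function.iterate_add_apply,
            Function.iterate_one, hfix, hfix]
        have hsplit : n * 2 = (n * 2 - 2) + 2 := by omega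
        rw [hsplit, Function.iterate_add_apply] at hfix2
        rw [← hfix2]
        exact FC_iter hC2 (n * 2 - 2)
      rcases hpC with h | h
      · right; left; exact h
      · right; right; exact mem_singleton_iff.mp h
  · rintro (rfl | rfl | rfl)
    · -- pstar
      have s5 := sqrt5_sq
      have sgt := sqrt5_gt
      have slt := sqrt5_lt
      refine ⟨⟨⟨⟨by unfold pstar; simp; linarith, by unfold pstar; simp; linarith⟩,
        by unfold pstar; simp; linarith, by unfold pstar; simp; linarith⟩, ?_⟩,
        1, le_refl 1, by rw [Function.iterate_one]; exact F_pstar⟩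
      intro hmem
      rcases hmem with h | h
      · have : ((3 - Real.sqrt 5) / 2 : ℝ) = 0 := congrArg Prod.fst h
        linarith
      · have : ((3 - Real.sqrt 5) / 2 : ℝ) = 1 := congrArg Prod.fst (mem_singleton_iff.mp h)
        linarith
    · -- (1, 0)
      refine ⟨⟨⟨⟨by norm_num, by norm_num⟩, by norm_num, by norm_num⟩, ?_⟩,
        2, by norm_num, ?_⟩
      · intro hmem
        rcases hmem with h | h
        · exact absurd (congrArg Prod.fst h) (by norm_num)
        · exact absurd (congrArg Prod.snd (mem_singleton_iff.mp h)) (by norm_num)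
      · rw [show (2:ℕ) = 1 + 1 from rfl, Function.iterate_add_apply,
          Function.iterate_one, F10, F01]
    · -- (0, 1)
      refine ⟨⟨⟨⟨by norm_num, by norm_num⟩, by norm_num, by norm_num⟩, ?_⟩,
        2, by norm_num, ?_⟩
      · intro hmem
        rcases hmem with h | h
        · exact absurd (congrArg Prod.snd h) (by norm_num)
        · exact absurd (congrArg Prod.fst (mem_singleton_iff.mp h)) (by norm_num)
      · rw [show (2:ℕ) = 1 + 1 from rfl, Function.iterate_add_apply,
          Function.iterate_one, F01, F10]
end

section
/- For every ε > 0 there exists a continuous map G : X → X with sup_{p∈X} ‖G(p) − F(p)‖ < ε such that p* := ((3−√5)/2, (3−√5)/2) is a repelling fixed point of G with a snap-back point; precisely: G(p*) = p*; there exist ρ > 0 and c > 1 such that ‖G(z) − p*‖ ≥ c‖z − p*‖ for every z with ‖z − p*‖ ≤ ρ; and there exist a point z₀ ≠ p* with ‖z₀ − p*‖ ≤ ρ and an integer m ≥ 1 with Gᵐ(z₀) = p*. -/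
open Set

/-- The Euclidean norm on ℝ². -/
noncomputable def euclNorm (p : ℝ × ℝ) : ℝ := Real.sqrt (p.1 ^ 2 + p.2 ^ 2)

/-! ### Auxiliary lemmas about `euclNorm` -/

lemma enorm_eq' (p : ℝ × ℝ) : euclNorm p = ‖(WithLp.equiv 2 (ℝ × ℝ)).symm p‖ := by
  rw [WithLp.prod_norm_eq_of_L2]
  simp [euclNorm, Real.norm_eq_abs, sq_abs]

lemma enorm_nonneg' (p : ℝ × ℝ) : 0 ≤ euclNorm p := Real.sqrt_nonneg _

lemma enorm_add_le' (p q : ℝ × ℝ) : euclNorm (p + q) ≤ euclNorm p + euclNorm q := by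
  simp only [enorm_eq']; exact norm_add_le _ _

lemma enorm_smul' (c : ℝ) (p : ℝ × ℝ) : euclNorm (c • p) = |c| * euclNorm p := by
  simp only [enorm_eq']
  rw [show (WithLp.equiv 2 (ℝ × ℝ)).symm (c • p) = c • (WithLp.equiv 2 (ℝ × ℝ)).symm p from rfl]
  rw [norm_smul, Real.norm_eq_abs]

lemma enorm_neg' (p : ℝ × ℝ) : euclNorm (-p) = euclNorm p := by
  simp [euclNorm, neg_pow]

lemma enorm_sub_comm' (p q : ℝ × ℝ) : euclNorm (p - q) = euclNorm (q - p) := by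
  rw [← enorm_neg' (p - q), neg_sub]

lemma enorm_zero' : euclNorm (0 : ℝ × ℝ) = 0 := by simp [euclNorm]

lemma enorm_fst_le' (p : ℝ × ℝ) : |p.1| ≤ euclNorm p := by
  rw [euclNorm, ← Real.sqrt_sq_eq_abs]
  exact Real.sqrt_le_sqrt (by nlinarith [sq_nonneg p.2])

lemma enorm_snd_le' (p : ℝ × ℝ) : |p.2| ≤ euclNorm p := by
  rw [euclNorm, ← Real.sqrt_sq_eq_abs]
  exact Real.sqrt_le_sqrt (by nlinarith [sq_nonneg p.1])

lemma enorm_le_add' (p : ℝ × ℝ) : euclNorm p ≤ |p.1| + |p.2| := by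
  have hs : Real.sqrt ((|p.1| + |p.2|)^2) = |p.1| + |p.2| := Real.sqrt_sq (by positivity)
  rw [euclNorm, ← hs]
  have hm := mul_nonneg (abs_nonneg p.1) (abs_nonneg p.2)
  exact Real.sqrt_le_sqrt (by nlinarith [abs_nonneg p.1, abs_nonneg p.2, sq_abs p.1, sq_abs p.2, hm])

lemma enorm_single' (r : ℝ) : euclNorm (r, 0) = |r| := by
  simp [euclNorm, Real.sqrt_sq_eq_abs]

/-- reverse triangle inequality -/
lemma enorm_sub_enorm_le' (p q : ℝ × ℝ) : euclNorm p - euclNorm q ≤ euclNorm (p - q) := by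
  have := enorm_add_le' (p - q) q
  rw [sub_add_cancel] at this
  linarith

lemma dist_le_enorm' (p q : ℝ × ℝ) : dist p q ≤ euclNorm (p - q) := by
  rw [Prod.dist_eq]
  apply max_le
  · rw [Real.dist_eq]; exact enorm_fst_le' (p - q)
  · rw [Real.dist_eq]; exact enorm_snd_le' (p - q)

lemma enorm_le_two_dist' (p q : ℝ × ℝ) : euclNorm (p - q) ≤ 2 * dist p q := by
  refine (enorm_le_add' _).trans ?_
  rw [Prod.dist_eq, Real.dist_eq, Real.dist_eq, two_mul]
  exact add_le_add (le_max_left _ _) (le_max_right _ _)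

/-! ### Auxiliary lemmas about `F`, `X`, `pstar` -/

lemma sqrt5_lt' : Real.sqrt 5 < 2.3 := by
  rw [show (2.3:ℝ) = Real.sqrt (2.3^2) from (Real.sqrt_sq (by norm_num)).symm]
  exact Real.sqrt_lt_sqrt (by norm_num) (by norm_num)

lemma lt_sqrt5' : 2.2 < Real.sqrt 5 := by
  rw [show (2.2:ℝ) = Real.sqrt (2.2^2) from (Real.sqrt_sq (by norm_num)).symm]
  exact Real.sqrt_lt_sqrt (by norm_num) (by norm_num)

lemma a_lb' : (0.35:ℝ) < (3 - Real.sqrt 5) / 2 := by nlinarith [sqrt5_lt']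
lemma a_ub' : ((3 - Real.sqrt 5) / 2 : ℝ) < 0.4 := by nlinarith [lt_sqrt5']

lemma pstar_fst_lb : (0.35:ℝ) < pstar.1 := a_lb'
lemma pstar_fst_ub : pstar.1 < 0.4 := a_ub'
lemma pstar_snd_lb : (0.35:ℝ) < pstar.2 := a_lb'
lemma pstar_snd_ub : pstar.2 < 0.4 := a_ub'

lemma sq_a' : ((3 - Real.sqrt 5) / 2 : ℝ)^2 = 3 * ((3 - Real.sqrt 5) / 2) - 1 := by
  have h : Real.sqrt 5 ^ 2 = 5 := Real.sq_sqrt (by norm_num)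
  nlinarith [h]

lemma F_pstar' : F pstar = pstar := by
  set a : ℝ := (3 - Real.sqrt 5) / 2 with ha
  have hsq : a^2 = 3*a - 1 := sq_a'
  have h1 : (0.35:ℝ) < a := a_lb'
  have h2 : a < 0.4 := a_ub'
  have hd0 : (0:ℝ) < a + a - a * a := by nlinarith
  have hd : a + a - a * a ≠ 0 := ne_of_gt hd0
  show ((a * (1 - a) / (a + a - a * a), a * (1 - a) / (a + a - a * a)) : ℝ × ℝ) = (a, a)
  have : a * (1 - a) / (a + a - a * a) = a := by
    rw [div_eq_iff hd]
    linear_combination a * hsq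
  rw [this]

lemma denom_pos' {p : ℝ × ℝ} (hp : p ∈ X) : 0 < p.1 + p.2 - p.1 * p.2 := by
  obtain ⟨⟨⟨hx0, hx1⟩, hy0, hy1⟩, hc⟩ := hp
  rcases hx0.lt_or_eq with h | h
  · nlinarith
  · rcases hy0.lt_or_eq with h2 | h2
    · nlinarith
    · exfalso; exact hc (Or.inl (by ext <;> simp [← h, ← h2]))

lemma mapsTo_F' : MapsTo F X X := by
  rintro ⟨x, y⟩ hp
  have hd := denom_pos' hp
  obtain ⟨⟨⟨hx0, hx1⟩, hy0, hy1⟩, hc⟩ := hp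
  simp only [X, mem_diff, mem_prod, mem_Icc, F] at *
  constructor
  · constructor
    · constructor
      · exact div_nonneg (by nlinarith) hd.le
      · rw [div_le_one hd]; nlinarith
    · constructor
      · exact div_nonneg (by nlinarith) hd.le
      · rw [div_le_one hd]; nlinarith
  · intro h
    simp only [mem_insert_iff, mem_singleton_iff, Prod.mk.injEq] at h hc
    rcases h with ⟨h1, h2⟩ | ⟨h1, h2⟩
    · rw [div_eq_zero_iff] at h1 h2
      rcases h1 with h1 | h1
      · rcases h2 with h2 | h2
        · rcases mul_eq_zero.1 h1 with hy | hx
          · rcases mul_eq_zero.1 h2 with hx | hy'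
            · exact hc (Or.inl ⟨hx, hy⟩)
            · nlinarith
          · rcases mul_eq_zero.1 h2 with hx' | hy'
            · nlinarith
            · exact hc (Or.inr ⟨by linarith, by linarith⟩)
        · linarith
      · linarith
    · rw [div_eq_one_iff_eq hd.ne'] at h1 h2
      nlinarith

lemma continuousOn_F' : ContinuousOn F X := by
  have hd : ∀ p ∈ X, p.1 + p.2 - p.1 * p.2 ≠ 0 := fun p hp => (denom_pos' hp).ne'
  apply ContinuousOn.prodMk
  · exact ContinuousOn.div (by fun_prop) (by fun_prop) hd
  · exact ContinuousOn.div (by fun_prop) (by fun_prop) hd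

lemma continuousAt_F' : ContinuousAt F pstar := by
  have hd0 : (0:ℝ) < pstar.1 + pstar.2 - pstar.1 * pstar.2 := by
    have h1 := pstar_fst_lb; have h2 := pstar_fst_ub
    have h3 := pstar_snd_lb; have h4 := pstar_snd_ub
    nlinarith
  have hd : pstar.1 + pstar.2 - pstar.1 * pstar.2 ≠ 0 := hd0.ne'
  apply ContinuousAt.prodMk
  · exact ContinuousAt.div (by fun_prop) (by fun_prop) hd
  · exact ContinuousAt.div (by fun_prop) (by fun_prop) hd

lemma continuous_enorm' : Continuous euclNorm := by
  unfold euclNorm; fun_prop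

/-! ### The perturbed map -/

/-- Outer cutoff: vanishes exactly at `pstar + (2ρ, 0)`. -/
noncomputable def psiF (ρ : ℝ) (z : ℝ × ℝ) : ℝ :=
  min 1 (euclNorm (z - pstar - (2*ρ, 0)) / ρ)

/-- Inner cutoff: equals 1 on the ball of radius 2ρ, 0 outside radius 4ρ. -/
noncomputable def phiF (ρ : ℝ) (z : ℝ × ℝ) : ℝ :=
  max 0 (min 1 ((4*ρ - euclNorm (z - pstar))/(2*ρ)))

/-- The perturbed map. -/
noncomputable def Gmap (ρ : ℝ) (z : ℝ × ℝ) : ℝ × ℝ :=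
  pstar + psiF ρ z • (phiF ρ z • ((2:ℝ) • (z - pstar)) + (1 - phiF ρ z) • (F z - pstar))

section Gfacts
variable {ρ : ℝ}

lemma psi_nonneg (hρ : 0 < ρ) (z : ℝ × ℝ) : 0 ≤ psiF ρ z :=
  le_min zero_le_one (div_nonneg (enorm_nonneg' _) hρ.le)

lemma psi_le_one (z : ℝ × ℝ) : psiF ρ z ≤ 1 := min_le_left _ _

lemma phi_nonneg (z : ℝ × ℝ) : 0 ≤ phiF ρ z := le_max_left _ _

lemma phi_le_one (z : ℝ × ℝ) : phiF ρ z ≤ 1 := max_le zero_le_one (min_le_left _ _)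

lemma Gmap_far (hρ : 0 < ρ) {z : ℝ × ℝ} (hz : 4*ρ ≤ euclNorm (z - pstar)) : Gmap ρ z = F z := by
  have hφz : phiF ρ z = 0 := by
    apply max_eq_left
    exact (min_le_right _ _).trans (div_nonpos_of_nonpos_of_nonneg (by linarith) (by linarith))
  have hψz : psiF ρ z = 1 := by
    apply min_eq_left
    rw [le_div_iff₀ hρ, one_mul]
    have h1 : euclNorm (z - pstar) - euclNorm ((2*ρ, 0) : ℝ × ℝ) ≤ euclNorm (z - pstar - (2*ρ, 0)) :=
      enorm_sub_enorm_le' _ _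
    rw [enorm_single', abs_of_pos (by linarith : (0:ℝ) < 2*ρ)] at h1
    linarith
  rw [Gmap, hφz, hψz]
  simp only [zero_smul, one_smul, sub_zero, zero_add]
  abel

lemma Gmap_ball (hρ : 0 < ρ) {z : ℝ × ℝ} (hz : euclNorm (z - pstar) ≤ ρ) :
    Gmap ρ z = pstar + (2:ℝ) • (z - pstar) := by
  have hφz : phiF ρ z = 1 := by
    rw [phiF]
    have h : (1:ℝ) ≤ (4*ρ - euclNorm (z - pstar))/(2*ρ) := by
      rw [le_div_iff₀ (by linarith), one_mul]; linarith
    rw [min_eq_left h, max_eq_right zero_le_one]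
  have hψz : psiF ρ z = 1 := by
    apply min_eq_left
    rw [le_div_iff₀ hρ, one_mul]
    have h1 : euclNorm ((2*ρ, 0) : ℝ × ℝ) - euclNorm (z - pstar) ≤
        euclNorm (((2*ρ, 0) : ℝ × ℝ) - (z - pstar)) := enorm_sub_enorm_le' _ _
    have h2 : euclNorm (((2*ρ, 0) : ℝ × ℝ) - (z - pstar)) = euclNorm (z - pstar - (2*ρ, 0)) :=
      enorm_sub_comm' _ _
    have h3 : euclNorm ((2*ρ, 0) : ℝ × ℝ) = 2*ρ := by
      rw [enorm_single', abs_of_pos (by linarith : (0:ℝ) < 2*ρ)]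
    rw [h2, h3] at h1
    linarith
  rw [Gmap, hφz, hψz]
  simp only [one_smul, sub_self, zero_smul, add_zero]

lemma Gmap_fix (hρ : 0 < ρ) : Gmap ρ pstar = pstar := by
  have h0 : euclNorm (pstar - pstar) ≤ ρ := by rw [sub_self, enorm_zero']; exact hρ.le
  rw [Gmap_ball hρ h0, sub_self, smul_zero, add_zero]

lemma Gmap_snap (hρ : 0 < ρ) : Gmap ρ (pstar + ((2*ρ:ℝ), (0:ℝ))) = pstar := by
  have hψz : psiF ρ (pstar + ((2*ρ:ℝ), (0:ℝ))) = 0 := by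
    rw [psiF, add_sub_cancel_left, sub_self, enorm_zero', zero_div]
    exact min_eq_right zero_le_one
  rw [Gmap, hψz, zero_smul, add_zero]

end Gfacts

/-! ### Main theorem -/

/-- For every ε > 0 there is a continuous map G : X → X, ε-close to F, for which p*
is a repelling fixed point with a snap-back point: G(p*) = p*, G expands (by a factor
c > 1) on the closed ρ-ball around p*, and some point z₀ ≠ p* of that ball is mapped
onto p* by a finite iterate of G. -/
theorem snap_back_repeller :
    ∀ ε : ℝ, 0 < ε →
      ∃ G : ℝ × ℝ → ℝ × ℝ,
        ContinuousOn G X ∧ MapsTo G X X ∧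
        (∀ p ∈ X, euclNorm (G p - F p) < ε) ∧
        G pstar = pstar ∧
        ∃ ρ c : ℝ, 0 < ρ ∧ 1 < c ∧
          (∀ z : ℝ × ℝ, euclNorm (z - pstar) ≤ ρ →
            c * euclNorm (z - pstar) ≤ euclNorm (G z - pstar)) ∧
          ∃ (z₀ : ℝ × ℝ) (m : ℕ),
            z₀ ≠ pstar ∧ euclNorm (z₀ - pstar) ≤ ρ ∧ 1 ≤ m ∧ G^[m] z₀ = pstar := by
  intro ε hε
  -- choose η and δ
  set η : ℝ := min (ε/4) (1/100) with hηdef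
  have hη : 0 < η := lt_min (by linarith) (by norm_num)
  have hη1 : η ≤ ε/4 := min_le_left _ _
  have hη2 : η ≤ 1/100 := min_le_right _ _
  obtain ⟨δ, hδ, hδc⟩ := Metric.continuousAt_iff.1 continuousAt_F' (η/2) (by linarith)
  -- choose ρ
  set ρ : ℝ := min (δ/8) (min (ε/100) (1/1000)) with hρdef
  have hρ : 0 < ρ := lt_min (by linarith) (lt_min (by linarith) (by norm_num))
  have hρδ : ρ ≤ δ/8 := min_le_left _ _
  have hρε : ρ ≤ ε/100 := (min_le_right _ _).trans (min_le_left _ _)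
  have hρ1 : ρ ≤ 1/1000 := (min_le_right _ _).trans (min_le_right _ _)
  -- near pstar, F is η-close to pstar
  have hFnear : ∀ z : ℝ × ℝ, euclNorm (z - pstar) < 4*ρ → euclNorm (F z - pstar) < η := by
    intro z hz
    have h1 : dist z pstar < δ := by
      have := dist_le_enorm' z pstar
      linarith [hρδ]
    have h2 := hδc h1
    rw [F_pstar'] at h2
    calc euclNorm (F z - pstar) ≤ 2 * dist (F z) pstar := enorm_le_two_dist' _ _
      _ < 2 * (η/2) := by linarith
      _ = η := by ring
  -- near region bound
  have hGnear : ∀ z : ℝ × ℝ, euclNorm (z - pstar) < 4*ρ →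
      euclNorm (Gmap ρ z - pstar) ≤ 8*ρ + η := by
    intro z hz
    have h1 : Gmap ρ z - pstar =
        psiF ρ z • (phiF ρ z • ((2:ℝ) • (z - pstar)) + (1 - phiF ρ z) • (F z - pstar)) := by
      rw [Gmap]; abel
    rw [h1, enorm_smul', abs_of_nonneg (psi_nonneg hρ z)]
    have h2 : euclNorm (phiF ρ z • ((2:ℝ) • (z - pstar)) + (1 - phiF ρ z) • (F z - pstar)) ≤
        phiF ρ z * (2 * euclNorm (z - pstar)) + (1 - phiF ρ z) * euclNorm (F z - pstar) := by
      refine (enorm_add_le' _ _).trans ?_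
      rw [enorm_smul', enorm_smul', enorm_smul', abs_of_nonneg (phi_nonneg z),
        abs_of_nonneg (by linarith [phi_le_one (ρ := ρ) z] : (0:ℝ) ≤ 1 - phiF ρ z),
        abs_of_nonneg (by norm_num : (0:ℝ) ≤ 2)]
    have h3 := hFnear z hz
    have h4 := enorm_nonneg' (z - pstar)
    have h5 := enorm_nonneg' (F z - pstar)
    have hb : phiF ρ z * (2 * euclNorm (z - pstar)) + (1 - phiF ρ z) * euclNorm (F z - pstar) ≤
        8*ρ + η := by
      nlinarith [phi_nonneg (ρ := ρ) z, phi_le_one (ρ := ρ) z]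
    nlinarith [psi_nonneg hρ z, psi_le_one (ρ := ρ) z, enorm_nonneg'
      (phiF ρ z • ((2:ℝ) • (z - pstar)) + (1 - phiF ρ z) • (F z - pstar)),
      enorm_nonneg' (Gmap ρ z - pstar)]
  -- G maps X to X
  have hmaps : MapsTo (Gmap ρ) X X := by
    intro z hz
    by_cases h : 4*ρ ≤ euclNorm (z - pstar)
    · rw [Gmap_far hρ h]; exact mapsTo_F' hz
    · push_neg at h
      have hb := hGnear z h
      have hbound : euclNorm (Gmap ρ z - pstar) ≤ 18/1000 := by linarith
      have h1 : |(Gmap ρ z).1 - pstar.1| ≤ 18/1000 := by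
        have := enorm_fst_le' (Gmap ρ z - pstar)
        simp only [Prod.fst_sub] at this; linarith
      have h2 : |(Gmap ρ z).2 - pstar.2| ≤ 18/1000 := by
        have := enorm_snd_le' (Gmap ρ z - pstar)
        simp only [Prod.snd_sub] at this; linarith
      rw [abs_le] at h1 h2
      have ha1 := pstar_fst_lb; have ha2 := pstar_fst_ub
      have hb1 := pstar_snd_lb; have hb2 := pstar_snd_ub
      constructor
      · exact ⟨⟨by linarith [h1.1], by linarith [h1.2]⟩, ⟨by linarith [h2.1], by linarith [h2.2]⟩⟩
      · intro hc
        simp only [mem_insert_iff, mem_singleton_iff] at hc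
        rcases hc with hc | hc
        · have : (Gmap ρ z).1 = 0 := by rw [hc]
          linarith [h1.1]
        · have : (Gmap ρ z).1 = 1 := by rw [hc]
          linarith [h1.2]
  -- G is continuous on X
  have hcont : ContinuousOn (Gmap ρ) X := by
    have hcψ : Continuous (psiF ρ) := by
      apply Continuous.min continuous_const
      exact (continuous_enorm'.comp (by fun_prop)).div_const ρ
    have hcφ : Continuous (phiF ρ) := by
      apply Continuous.max continuous_const
      apply Continuous.min continuous_const
      exact ((continuous_const.sub (continuous_enorm'.comp (by fun_prop)))).div_const (2*ρ)
    apply ContinuousOn.add continuousOn_const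
    apply ContinuousOn.smul hcψ.continuousOn
    apply ContinuousOn.add
    · exact ContinuousOn.smul hcφ.continuousOn (by fun_prop)
    · exact ContinuousOn.smul (continuous_const.sub hcφ).continuousOn
        (continuousOn_F'.sub continuousOn_const)
  -- ε-closeness
  have hclose : ∀ p ∈ X, euclNorm (Gmap ρ p - F p) < ε := by
    intro p _
    by_cases h : 4*ρ ≤ euclNorm (p - pstar)
    · rw [Gmap_far hρ h]; rw [sub_self, enorm_zero']; exact hε
    · push_neg at h
      have h1 := hGnear p h
      have h2 := hFnear p h
      have h3 : Gmap ρ p - F p = (Gmap ρ p - pstar) + (pstar - F p) := by abel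
      have h4 : euclNorm (pstar - F p) = euclNorm (F p - pstar) := enorm_sub_comm' _ _
      calc euclNorm (Gmap ρ p - F p) ≤ euclNorm (Gmap ρ p - pstar) + euclNorm (pstar - F p) := by
            rw [h3]; exact enorm_add_le' _ _
        _ ≤ (8*ρ + η) + η := by rw [h4]; linarith
        _ < ε := by linarith
  refine ⟨Gmap ρ, hcont, hmaps, hclose, Gmap_fix hρ, ρ, 2, hρ, by norm_num, ?_, ?_⟩
  · -- expansion
    intro z hz
    rw [Gmap_ball hρ hz]
    have h : pstar + (2:ℝ) • (z - pstar) - pstar = (2:ℝ) • (z - pstar) := by abel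
    rw [h, enorm_smul', abs_of_nonneg (by norm_num : (0:ℝ) ≤ 2)]
  · -- snap-back point
    refine ⟨pstar + ((ρ:ℝ), (0:ℝ)), 2, ?_, ?_, one_le_two, ?_⟩
    · intro h
      have : pstar.1 + ρ = pstar.1 := congrArg Prod.fst h
      linarith
    · rw [add_sub_cancel_left, enorm_single', abs_of_pos hρ]
    · have hstep1 : Gmap ρ (pstar + ((ρ:ℝ), (0:ℝ))) = pstar + ((2*ρ:ℝ), (0:ℝ)) := by
        have hm : euclNorm (pstar + ((ρ:ℝ), (0:ℝ)) - pstar) ≤ ρ := by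
          rw [add_sub_cancel_left, enorm_single', abs_of_pos hρ]
        rw [Gmap_ball hρ hm, add_sub_cancel_left]
        have : (2:ℝ) • ((ρ:ℝ), (0:ℝ)) = ((2*ρ:ℝ), (0:ℝ)) := by
          rw [Prod.smul_mk, smul_eq_mul, smul_eq_mul, mul_zero]
        rw [this]
      show Gmap ρ (Gmap ρ (pstar + ((ρ:ℝ), (0:ℝ)))) = pstar
      rw [hstep1, Gmap_snap hρ]
end
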